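/- Let G be a word-representable (i.e., 0-11-representable) simple graph, let v be a vertex of G, and let N be a subset of the set of neighbours of v in G. Then the graph G_N, obtained from G by deleting all edges uv with u ∈ N (keeping all vertices), is 1-11-representable. -/

import Mathlib

/-- Number of occurrences of the consecutive pattern 11 in a word,
i.e. the number of positions `i` with `u i = u (i+1)`. -/
def pattern11Count {V : Type*} [DecidableEq V] (u : List V) : ℕ :=
  (u.zip u.tail).countP (fun p => decide (p.1 = p.2))

/-- `w` is a `k`-11-representant of the simple graph `G`: every vertex occurs in `w`,
and two distinct vertices are adjacent iff the subword of `w` induced by them contains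
at most `k` occurrences of the consecutive pattern 11. -/
def IsK11Rep {V : Type*} [DecidableEq V] (G : SimpleGraph V) (k : ℕ) (w : List V) : Prop :=
  (∀ v : V, v ∈ w) ∧
  ∀ x y : V, x ≠ y →
    (G.Adj x y ↔ pattern11Count (w.filter (fun a => decide (a = x ∨ a = y))) ≤ k)

/-- A simple graph is `k`-11-representable if it has a `k`-11-representant. -/
def K11Representable {V : Type*} [DecidableEq V] (G : SimpleGraph V) (k : ℕ) : Prop :=
  ∃ w : List V, IsK11Rep G k w

/-- A graph is `t`-uniformly `k`-11-representable if it has a `k`-11-representant in which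
every vertex occurs exactly `t` times. -/
def UniformK11Rep {V : Type*} [DecidableEq V] (G : SimpleGraph V) (t k : ℕ) : Prop :=
  ∃ w : List V, IsK11Rep G k w ∧ ∀ v : V, w.count v = t

/-- The final permutation `σ(w)`: distinct letters of `w` in order of last occurrence. -/
def finalPerm {V : Type*} [DecidableEq V] (w : List V) : List V := w.dedup

/-- The initial permutation `π(w)`: distinct letters of `w` in order of first occurrence. -/
def initPerm {V : Type*} [DecidableEq V] (w : List V) : List V := (w.reverse.dedup).reverse

/-!
Appending to a word-representant the final permutation of its letters that occur fewer than the
maximal number of times keeps it a word-representant; iterating, `G` gets a uniform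
word-representant `w`, in which every letter occurs equally often.
Let `Z` list `N` and put `W = Z w v w Zᴿ`. For a non-edge `xy` of `G`, `w|_{x,y}` contains an `11`,
so `W|_{x,y}` contains two. For an edge, `w|_{x,y}` alternates and, since `x` and `y` occur
equally often, begins and ends with different letters; so the two copies of `w|_{x,y}` create no
`11` themselves, and the `11`s of `W|_{x,y}` are one at the ends if `x ∈ N` or `y ∈ N` and one in
the middle if `v ∈ {x, y}`. As `v ∉ N`, there are two exactly when `xy` is a deleted edge `uv`.
-/

section
variable {V : Type*} [DecidableEq V]

@[simp]
theorem pattern11Count_nil : pattern11Count ([] : List V) = 0 := rfl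

@[simp]
theorem pattern11Count_singleton (a : V) : pattern11Count [a] = 0 := rfl

theorem pattern11Count_cons (a : V) (l : List V) :
    pattern11Count (a :: l) = pattern11Count l + if l.head? = some a then 1 else 0 := by
  cases l with
  | nil => rfl
  | cons b l => simp [pattern11Count, List.countP_cons, eq_comm]

theorem pattern11Count_append_singleton (l : List V) (a : V) :
    pattern11Count (l ++ [a]) = pattern11Count l + if l.getLast? = some a then 1 else 0 := by
  induction l with
  | nil => rfl
  | cons c l ih =>
    cases l with
    | nil => simp [pattern11Count_cons, eq_comm]
    | cons d l =>
      have hhead : ((d :: l) ++ [a]).head? = (d :: l).head? := rfl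
      rw [List.cons_append (a := c), pattern11Count_cons, ih, hhead, pattern11Count_cons c,
        List.getLast?_cons_cons]
      omega

theorem pattern11Count_append_cons (l₁ l₂ : List V) (a : V) :
    pattern11Count (l₁ ++ a :: l₂) = pattern11Count (l₁ ++ [a]) + pattern11Count (a :: l₂) := by
  induction l₁ with
  | nil => simp
  | cons c l₁ ih =>
    simp only [List.cons_append, pattern11Count_cons, ih, List.head?_append]
    cases l₁.head? <;>
      simp only [List.head?_cons, Option.or_some, Option.getD_none, Option.getD_some,
        Option.some.injEq] <;> omega

theorem pattern11Count_append_of_getLast? {l₁ : List V} {b : V} (hb : l₁.getLast? = some b)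
    (l₂ : List V) :
    pattern11Count (l₁ ++ l₂) =
      pattern11Count l₁ + pattern11Count l₂ + if l₂.head? = some b then 1 else 0 := by
  cases l₂ with
  | nil => simp
  | cons c l₂ =>
    rw [pattern11Count_append_cons, pattern11Count_append_singleton, hb]
    simp only [List.head?_cons, Option.some.injEq, eq_comm (a := b)]
    omega

theorem pattern11Count_add_le_append (l₁ l₂ : List V) :
    pattern11Count l₁ + pattern11Count l₂ ≤ pattern11Count (l₁ ++ l₂) := by
  cases l₂ with
  | nil => simp
  | cons a l₂ =>
    rw [pattern11Count_append_cons, pattern11Count_append_singleton]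
    omega

theorem pattern11Count_eq_zero_of_nodup {l : List V} (hl : l.Nodup) : pattern11Count l = 0 := by
  induction l with
  | nil => rfl
  | cons a l ih =>
    rw [List.nodup_cons] at hl
    have : l.head? ≠ some a := fun h => hl.1 (List.mem_of_mem_head? h)
    simp [pattern11Count_cons, ih hl.2, this]

theorem pattern11Count_append_append_of_eq_zero {m : List V} {a b : V}
    (hm : pattern11Count m = 0) (ha : m.head? = some a) (hb : m.getLast? = some b)
    (l₁ l₂ : List V) :
    pattern11Count (l₁ ++ (m ++ l₂)) = pattern11Count (l₁ ++ [a]) + pattern11Count (b :: l₂) := by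
  obtain ⟨m₁, rfl⟩ := List.head?_eq_some_iff.mp ha
  obtain ⟨m₂, hm₂⟩ := List.getLast?_eq_some_iff.mp hb
  have hsplit : a :: (m₁ ++ l₂) = m₂ ++ b :: l₂ := by simp [← List.cons_append, hm₂]
  have hright : pattern11Count (a :: (m₁ ++ l₂)) = pattern11Count (b :: l₂) := by
    rw [hsplit, pattern11Count_append_cons, ← hm₂, hm, zero_add]
  rw [List.cons_append, pattern11Count_append_cons, hright]

theorem count_add_ite_getLast?_eq_of_pattern11Count_eq_zero {m : List V} {x y : V}
    (hxy : x ≠ y) (hm : ∀ z ∈ m, z = x ∨ z = y) (h0 : pattern11Count m = 0) :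
    m.count x + (if m.getLast? = some y then 1 else 0) =
      m.count y + (if m.head? = some x then 1 else 0) := by
  induction m with
  | nil => simp
  | cons c r ih =>
    rw [pattern11Count_cons] at h0
    have ih := ih (fun z hz => hm z (List.mem_cons_of_mem c hz)) (by omega)
    cases r with
    | nil => rcases hm c (by simp) with rfl | rfl <;> simp [hxy, hxy.symm]
    | cons d r =>
      have hdc : d ≠ c := by rintro rfl; simp at h0
      rw [List.getLast?_cons_cons, List.count_cons, List.count_cons]
      rcases hm c (by simp) with rfl | rfl <;> rcases hm d (by simp) with rfl | rfl <;>
        grind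

theorem head?_getLast?_of_pattern11Count_eq_zero {m : List V} {x y : V} (hxy : x ≠ y)
    (hm : ∀ z ∈ m, z = x ∨ z = y) (h0 : pattern11Count m = 0) (hx : x ∈ m)
    (hcount : m.count x = m.count y) :
    (m.head? = some x ∧ m.getLast? = some y) ∨ (m.head? = some y ∧ m.getLast? = some x) := by
  have key := count_add_ite_getLast?_eq_of_pattern11Count_eq_zero hxy hm h0
  have hne : m ≠ [] := List.ne_nil_of_mem hx
  obtain ⟨c, hc⟩ := Option.isSome_iff_exists.mp (List.isSome_head?.mpr hne)
  obtain ⟨d, hd⟩ := Option.isSome_iff_exists.mp (List.getLast?_isSome.mpr hne)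
  rcases hm c (List.mem_of_mem_head? hc) with rfl | rfl <;>
    rcases hm d (List.mem_of_getLast? hd) with rfl | rfl <;>
    simp_all [hxy.symm]

theorem count_le_count_of_pattern11Count_eq_zero {m : List V} {x y : V} (hxy : x ≠ y)
    (hm : ∀ z ∈ m, z = x ∨ z = y) (h0 : pattern11Count m = 0) (hy : m.getLast? = some y) :
    m.count x ≤ m.count y := by
  have key := count_add_ite_getLast?_eq_of_pattern11Count_eq_zero hxy hm h0
  rw [if_pos hy] at key
  split_ifs at key <;> omega

theorem List.dedup_filter (p : V → Bool) (l : List V) :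
    (l.filter p).dedup = l.dedup.filter p := by
  induction l with
  | nil => rfl
  | cons a l ih =>
    by_cases hpa : p a
    · by_cases hal : a ∈ l
      · have : a ∈ l.filter p := List.mem_filter.mpr ⟨hal, hpa⟩
        rw [List.filter_cons_of_pos hpa, List.dedup_cons_of_mem this, List.dedup_cons_of_mem hal,
          ih]
      · have : a ∉ l.filter p := fun h => hal (List.mem_filter.mp h).1
        rw [List.filter_cons_of_pos hpa, List.dedup_cons_of_notMem this,
          List.dedup_cons_of_notMem hal, List.filter_cons_of_pos hpa, ih]
    · rw [List.filter_cons_of_neg hpa, ih, List.dedup_cons]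
      split_ifs <;> simp [hpa]

theorem List.getLast?_dedup (l : List V) : l.dedup.getLast? = l.getLast? := by
  induction l with
  | nil => rfl
  | cons a l ih =>
    rw [List.getLast?_cons]
    by_cases hal : a ∈ l
    · rw [List.dedup_cons_of_mem hal, ih]
      obtain ⟨b, hb⟩ :=
        Option.isSome_iff_exists.mp (List.getLast?_isSome.mpr (List.ne_nil_of_mem hal))
      simp [hb]
    · rw [List.dedup_cons_of_notMem hal, List.getLast?_cons, ih]

theorem finalPerm_filter (p : V → Bool) (w : List V) :
    (finalPerm w).filter p = finalPerm (w.filter p) :=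
  (List.dedup_filter p w).symm

theorem finalPerm_eq_pair {m : List V} {a b : V} (hab : a ≠ b)
    (hm : ∀ z ∈ m, z = a ∨ z = b) (ha : a ∈ m) (hb : m.getLast? = some b) :
    finalPerm m = [a, b] := by
  have hperm : (finalPerm m).Perm [a, b] := by
    rw [finalPerm, List.perm_ext_iff_of_nodup (List.nodup_dedup m) (by simp [hab])]
    intro z
    simp only [List.mem_dedup, List.mem_cons, List.not_mem_nil, or_false]
    exact ⟨hm z, by rintro (rfl | rfl) <;> [exact ha; exact List.mem_of_getLast? hb]⟩
  rcases List.perm_pair.mp hperm with h | h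
  · exact h
  · have := List.getLast?_dedup m
    rw [← finalPerm, h, hb] at this
    exact (hab (by simpa using this)).elim

theorem isK11Rep_append_finalPerm_filter {G : SimpleGraph V} {w : List V}
    (hw : IsK11Rep G 0 w) (M : ℕ) :
    IsK11Rep G 0 (w ++ (finalPerm w).filter (fun z => w.count z < M)) := by
  refine ⟨fun z => List.mem_append_left _ (hw.1 z), fun x y hxy => ?_⟩
  rw [hw.2 x y hxy, List.filter_append, List.filter_comm, finalPerm_filter]
  set m := w.filter (fun a => decide (a = x ∨ a = y))
  have hm : ∀ z ∈ m, z = x ∨ z = y := fun z hz => by simpa using (List.mem_filter.mp hz).2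
  have hxm : x ∈ m := List.mem_filter.mpr ⟨hw.1 x, by simp⟩
  have hym : y ∈ m := List.mem_filter.mpr ⟨hw.1 y, by simp⟩
  refine ⟨fun h0 => ?_, fun h => (Nat.le_add_right _ _).trans
    ((pattern11Count_add_le_append _ _).trans h)⟩
  have key : ∀ a b, a ≠ b → (∀ z ∈ m, z = a ∨ z = b) → a ∈ m → m.getLast? = some b →
      pattern11Count (m ++ (finalPerm m).filter (fun z => w.count z < M)) ≤ 0 := by
    intro a b hab hmab ha hb
    have hcount : ∀ z ∈ m, m.count z = w.count z := fun z hz =>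
      List.count_filter (List.mem_filter.mp hz).2
    have hle := count_le_count_of_pattern11Count_eq_zero hab hmab (by omega) hb
    rw [hcount a ha, hcount b (List.mem_of_getLast? hb)] at hle
    rw [finalPerm_eq_pair hab hmab ha hb, pattern11Count_append_of_getLast? hb]
    by_cases hSb : w.count b < M
    · simp [hle.trans_lt hSb, hSb, pattern11Count_cons, hab, hab.symm, Nat.le_zero.mp h0]
    · by_cases hSa : w.count a < M <;> simp [hSa, hSb, pattern11Count_cons, hab, Nat.le_zero.mp h0]
  obtain ⟨c, hc⟩ := Option.isSome_iff_exists.mp (List.getLast?_isSome.mpr (List.ne_nil_of_mem hxm))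
  rcases hm c (List.mem_of_getLast? hc) with rfl | rfl
  · exact key y c hxy.symm (fun z hz => (hm z hz).symm) hym hc
  · exact key x c hxy hm hxm hc

theorem uniformK11Rep_of_isK11Rep {G : SimpleGraph V} {w : List V} {M : ℕ}
    (hw : IsK11Rep G 0 w) (hM : ∀ z, w.count z ≤ M) : UniformK11Rep G M 0 := by
  suffices ∀ k (w : List V), IsK11Rep G 0 w → (∀ z, w.count z ≤ M) →
      (∀ z, M ≤ w.count z + k) → UniformK11Rep G M 0 from
    this M w hw hM fun z => Nat.le_add_left M _
  intro k
  induction k with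
  | zero => exact fun w hw hle hge => ⟨w, hw, fun z => le_antisymm (hle z) (hge z)⟩
  | succ k ih =>
    intro w hw hle hge
    have hcount : ∀ z, (w ++ (finalPerm w).filter (fun z => w.count z < M)).count z =
        w.count z + if w.count z < M then 1 else 0 := by
      intro z
      rw [List.count_append]
      split_ifs with hz
      · rw [List.count_filter (by simpa using hz), finalPerm, List.count_dedup, if_pos (hw.1 z)]
      · simp [List.count_eq_zero, hz]
    refine ih _ (isK11Rep_append_finalPerm_filter hw M) (fun z => ?_) (fun z => ?_) <;>
      specialize hle z <;> specialize hge z <;> rw [hcount] <;> split_ifs <;> omega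

theorem pattern11Count_append_singleton_add_cons_reverse {s : List V} {a b : V} (hab : a ≠ b)
    (hs : s.Nodup) (hsab : ∀ z ∈ s, z = a ∨ z = b) :
    pattern11Count (s ++ [a]) + pattern11Count (b :: s.reverse) = if s = [] then 0 else 1 := by
  rw [pattern11Count_append_singleton, pattern11Count_cons, List.head?_reverse,
    pattern11Count_eq_zero_of_nodup hs, pattern11Count_eq_zero_of_nodup (List.nodup_reverse.mpr hs)]
  cases hlast : s.getLast? with
  | none => simp [List.getLast?_eq_none_iff.mp hlast]
  | some c =>
    have hc := List.mem_of_getLast? hlast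
    rcases hsab c hc with rfl | rfl <;> simp [List.ne_nil_of_mem hc, hab, hab.symm]

theorem pattern11Count_sandwich {m s t : List V} {a b : V} (hab : a ≠ b)
    (hm : pattern11Count m = 0) (ha : m.head? = some a) (hb : m.getLast? = some b)
    (hs : s.Nodup) (hsab : ∀ z ∈ s, z = a ∨ z = b)
    (ht : t.length ≤ 1) (htab : ∀ z ∈ t, z = a ∨ z = b) :
    pattern11Count (s ++ m ++ t ++ m ++ s.reverse) =
      (if s = [] then 0 else 1) + (if t = [] then 0 else 1) := by
  have hmid : pattern11Count (b :: (t ++ [a])) = if t = [] then 0 else 1 := by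
    match t, ht with
    | [], _ => simp [pattern11Count_cons, hab]
    | [c], _ => rcases htab c (by simp) with rfl | rfl <;> simp [pattern11Count_cons, hab]
  simp only [List.append_assoc]
  rw [pattern11Count_append_append_of_eq_zero hm ha hb, ← List.cons_append,
    pattern11Count_append_append_of_eq_zero hm ha hb, List.cons_append, hmid,
    ← pattern11Count_append_singleton_add_cons_reverse hab hs hsab]
  omega

theorem pattern11Count_add_le_append_append (l₁ m l₂ l₃ : List V) :
    pattern11Count m + pattern11Count m ≤ pattern11Count (l₁ ++ m ++ l₂ ++ m ++ l₃) := by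
  have h₁ := pattern11Count_add_le_append (l₁ ++ m ++ l₂ ++ m) l₃
  have h₂ := pattern11Count_add_le_append (l₁ ++ m ++ l₂) m
  have h₃ := pattern11Count_add_le_append (l₁ ++ m) l₂
  have h₄ := pattern11Count_add_le_append l₁ m
  omega

theorem pattern11Count_filter_of_adj {G : SimpleGraph V} {w : List V} (Z : List V) (v : V)
    (hw : IsK11Rep G 0 w) (huni : ∀ x y, w.count x = w.count y) (hZ : Z.Nodup) {x y : V}
    (hxy : x ≠ y) (hadj : G.Adj x y) :
    pattern11Count ((Z ++ w ++ [v] ++ w ++ Z.reverse).filter fun a => decide (a = x ∨ a = y)) =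
      (if x ∈ Z ∨ y ∈ Z then 1 else 0) + (if v = x ∨ v = y then 1 else 0) := by
  have h0 := Nat.le_zero.mp ((hw.2 x y hxy).mp hadj)
  simp only [List.filter_append, List.filter_reverse]
  set q : V → Bool := fun a => decide (a = x ∨ a = y)
  set m := w.filter q
  have hm : ∀ z ∈ m, z = x ∨ z = y := fun z hz => by simpa [q] using (List.mem_filter.mp hz).2
  have hcount : m.count x = m.count y := by
    rw [List.count_filter (by simp [q]), List.count_filter (by simp [q]), huni]
  obtain ⟨a, b, hab, hxyab, ha, hb⟩ : ∃ a b, a ≠ b ∧ (∀ z, z = x ∨ z = y ↔ z = a ∨ z = b) ∧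
      m.head? = some a ∧ m.getLast? = some b := by
    rcases head?_getLast?_of_pattern11Count_eq_zero hxy hm h0
      (List.mem_filter.mpr ⟨hw.1 x, by simp [q]⟩) hcount with ⟨ha, hb⟩ | ⟨ha, hb⟩
    · exact ⟨x, y, hxy, fun z => Iff.rfl, ha, hb⟩
    · exact ⟨y, x, hxy.symm, fun z => or_comm, ha, hb⟩
  have hfilter : ∀ l : List V, ∀ z ∈ l.filter q, z = a ∨ z = b :=
    fun l z hz => (hxyab z).mp (by simpa [q] using (List.mem_filter.mp hz).2)
  rw [pattern11Count_sandwich hab h0 ha hb (hZ.filter q) (hfilter Z)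
    ((List.length_filter_le _ _).trans (by simp)) (hfilter [v])]
  have hs : Z.filter q = [] ↔ ¬(x ∈ Z ∨ y ∈ Z) := by
    simp only [List.filter_eq_nil_iff, q, decide_eq_true_eq, not_or]
    exact ⟨fun h => ⟨fun hx => (h x hx).1 rfl, fun hy => (h y hy).2 rfl⟩,
      fun ⟨hx, hy⟩ u hu => ⟨fun hux => hx (hux ▸ hu), fun huy => hy (huy ▸ hu)⟩⟩
  have ht : [v].filter q = [] ↔ ¬(v = x ∨ v = y) := by simp [q, List.filter_eq_nil_iff]
  simp only [hs, ht]
  split_ifs <;> rfl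

theorem isK11Rep_deleteEdges_star {G : SimpleGraph V} {w Z : List V} {v : V} {N : Set V}
    (hw : IsK11Rep G 0 w) (huni : ∀ x y, w.count x = w.count y) (hZ : Z.Nodup)
    (hZN : ∀ u, u ∈ Z ↔ u ∈ N) (hvN : v ∉ N) :
    IsK11Rep (G.deleteEdges {e | ∃ u ∈ N, e = s(u, v)}) 1 (Z ++ w ++ [v] ++ w ++ Z.reverse) := by
  refine ⟨fun z => by simp [hw.1 z], fun x y hxy => ?_⟩
  have hstar : s(x, y) ∈ {e : Sym2 V | ∃ u ∈ N, e = s(u, v)} ↔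
      (x ∈ N ∧ y = v) ∨ (y ∈ N ∧ x = v) := by
    simp only [Set.mem_ofPred_eq, Sym2.eq_iff]
    aesop
  rw [SimpleGraph.deleteEdges_adj, hstar]
  by_cases hadj : G.Adj x y
  · rw [pattern11Count_filter_of_adj Z v hw huni hZ hxy hadj]
    simp only [hadj, true_and, hZN]
    split_ifs <;> grind
  · set q : V → Bool := fun a => decide (a = x ∨ a = y)
    have h1 : 1 ≤ pattern11Count (w.filter q) :=
      Nat.one_le_iff_ne_zero.mpr fun h => hadj ((hw.2 x y hxy).mpr h.le)
    have h2 := pattern11Count_add_le_append_append (Z.filter q) (w.filter q) ([v].filter q)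
      (Z.filter q).reverse
    simp only [hadj, false_and, false_iff, not_le, List.filter_append, List.filter_reverse]
    omega

end

theorem k11Representable_deleteStarEdges_general {V : Type*} [DecidableEq V]
    (G : SimpleGraph V) (v : V) (N : Set V) (hN : N ⊆ G.neighborSet v)
    (h : K11Representable G 0) :
    K11Representable (G.deleteEdges {e : Sym2 V | ∃ u ∈ N, e = s(u, v)}) 1 := by
  classical
  obtain ⟨w₀, hw₀⟩ := h
  obtain ⟨w, hw, huni⟩ := uniformK11Rep_of_isK11Rep hw₀ fun _ => List.count_le_length
  have hvN : v ∉ N := fun hv => (hN hv).ne rfl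
  refine ⟨_, isK11Rep_deleteEdges_star hw (fun x y => (huni x).trans (huni y).symm)
    ((List.nodup_dedup w).filter fun u => u ∈ N) (fun u => ?_) hvN⟩
  simp [hw.1 u]

/-- if `G` is word-representable, `v` is a vertex and `N` is a set of
neighbours of `v`, then the graph obtained from `G` by deleting all edges `uv` with
`u ∈ N` is 1-11-representable. -/
theorem k11Representable_deleteStarEdges {V : Type*} [DecidableEq V] [Fintype V]
    (G : SimpleGraph V) (v : V) (N : Set V) (hN : N ⊆ G.neighborSet v)
    (h : K11Representable G 0) :
    K11Representable (G.deleteEdges {e : Sym2 V | ∃ u ∈ N, e = s(u, v)}) 1 :=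
  k11Representable_deleteStarEdges_general G v N hN h
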